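/- arXiv:2310.18710 — 2 statements merged into one kernel-verified Lean document; each statement's English description precedes it below -/
import Mathlib

section
/- Let X be a complete CAT(0) space and Y ⊆ X a nonempty bounded subset with circumradius r_Y := inf{ r > 0 : ∃ x ∈ X, Y ⊆ closed ball B(x,r) }. Then there exists a unique point c_Y ∈ X (the circumcenter) such that Y is contained in the closed ball of radius r_Y centered at c_Y. -/
/-!
The CAT(0) inequality at the midpoint `m` of `[x, x']` reads
`d(z, m)² ≤ ½ d(z, x)² + ½ d(z, x')² - ¼ d(x, x')²`. So if `Y` lies in the balls of radius `s`
about `x` and about `x'`, it lies in the ball of radius `√(s² - ¼ d(x, x')²)` about `m`, whence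
`d(x, x')² ≤ 4 (s² - r_Y²)`. Centres of balls around `Y` whose radii decrease to `r_Y` therefore
form a Cauchy sequence; its limit is a circumcenter, and the case `s = r_Y` gives uniqueness.
-/

open Metric Set Filter Topology

/-- A map is a geodesic (parametrized by arclength) on a set of parameters. -/
def IsGeodesicOn {X : Type*} [MetricSpace X] (γ : ℝ → X) (s : Set ℝ) : Prop :=
  ∀ ⦃t₁⦄, t₁ ∈ s → ∀ ⦃t₂⦄, t₂ ∈ s → dist (γ t₁) (γ t₂) = |t₁ - t₂|

/-- A geodesic segment from `x` to `y`, parametrized by arclength on `[0, d(x,y)]`. -/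
def IsGeodesicSegment {X : Type*} [MetricSpace X] (γ : ℝ → X) (x y : X) : Prop :=
  γ 0 = x ∧ γ (dist x y) = y ∧ IsGeodesicOn γ (Set.Icc 0 (dist x y))

/-- A CAT(0) space: a geodesic metric space in which every geodesic triangle
satisfies the CAT(0) comparison inequality (expressed via the standard
convexity form of the comparison inequality along geodesics). -/
class CAT0Space (X : Type*) [MetricSpace X] : Prop where
  geodesic : ∀ x y : X, ∃ γ : ℝ → X, IsGeodesicSegment γ x y
  comparison : ∀ (x y z : X) (γ : ℝ → X), IsGeodesicSegment γ x y →
    ∀ t ∈ Set.Icc (0:ℝ) 1,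
      dist z (γ (t * dist x y)) ^ 2 ≤
        (1 - t) * dist z x ^ 2 + t * dist z y ^ 2 - t * (1 - t) * dist x y ^ 2

/-- A subset is geodesically convex if it contains every geodesic segment
between any two of its points. -/
def GeodesicallyConvex {X : Type*} [MetricSpace X] (C : Set X) : Prop :=
  ∀ x ∈ C, ∀ y ∈ C, ∀ γ : ℝ → X, IsGeodesicSegment γ x y →
    ∀ t ∈ Set.Icc 0 (dist x y), γ t ∈ C

section PseudoMetricSpace

variable {X : Type*} [PseudoMetricSpace X]

/-- For unbounded `Y` the set is empty and `sInf` returns the junk value `0`. -/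
noncomputable def circumradius (Y : Set X) : ℝ :=
  sInf {r : ℝ | 0 < r ∧ ∃ x : X, Y ⊆ closedBall x r}

theorem circumradius_nonneg (Y : Set X) : 0 ≤ circumradius Y :=
  Real.sInf_nonneg fun _ hr => hr.1.le

theorem circumradius_le_of_subset_closedBall {Y : Set X} {x : X} {r : ℝ} (hr : 0 ≤ r)
    (hY : Y ⊆ closedBall x r) : circumradius Y ≤ r := by
  refine le_of_forall_pos_le_add fun ε hε => csInf_le ⟨0, fun _ hs => hs.1.le⟩ ?_
  exact ⟨by linarith, x, hY.trans (closedBall_subset_closedBall (by linarith))⟩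

theorem exists_subset_closedBall_of_circumradius_lt [Nonempty X] {Y : Set X}
    (hbdd : Bornology.IsBounded Y) {r : ℝ} (hr : circumradius Y < r) :
    ∃ x, Y ⊆ closedBall x r := by
  let x₀ : X := Classical.arbitrary X
  obtain ⟨r₀, hr₀⟩ := hbdd.subset_closedBall x₀
  have hradii : {r : ℝ | 0 < r ∧ ∃ x : X, Y ⊆ closedBall x r}.Nonempty :=
    ⟨max r₀ 1, by positivity, x₀, hr₀.trans (closedBall_subset_closedBall (le_max_left _ _))⟩
  obtain ⟨r', ⟨-, x, hx⟩, hr'⟩ := (csInf_lt_iff ⟨0, fun _ hs => hs.1.le⟩ hradii).1 hr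
  exact ⟨x, hx.trans (closedBall_subset_closedBall hr'.le)⟩

theorem subset_closedBall_of_tendsto {Y : Set X} {x : ℕ → X} {r : ℕ → ℝ} {c : X} {R : ℝ}
    (hY : ∀ n, Y ⊆ closedBall (x n) (r n)) (hx : Tendsto x atTop (𝓝 c))
    (hr : Tendsto r atTop (𝓝 R)) : Y ⊆ closedBall c R := fun _ hy =>
  le_of_tendsto_of_tendsto' (tendsto_const_nhds.dist hx) hr fun n => hY n hy

end PseudoMetricSpace

section MetricSpace

variable {X : Type*} [MetricSpace X]

theorem CAT0Space.exists_midpoint_dist_sq_le [CAT0Space X] (x x' : X) :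
    ∃ m : X, ∀ z, dist z m ^ 2 ≤ (dist z x ^ 2 + dist z x' ^ 2) / 2 - dist x x' ^ 2 / 4 := by
  obtain ⟨γ, hγ⟩ := CAT0Space.geodesic x x'
  refine ⟨γ (1 / 2 * dist x x'), fun z => ?_⟩
  have := CAT0Space.comparison x x' z γ hγ (1 / 2) ⟨by norm_num, by norm_num⟩
  linarith

theorem dist_sq_le_of_subset_closedBall [CAT0Space X] {Y : Set X} (hne : Y.Nonempty)
    {x x' : X} {s : ℝ} (hx : Y ⊆ closedBall x s) (hx' : Y ⊆ closedBall x' s) :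
    dist x x' ^ 2 ≤ 4 * (s ^ 2 - circumradius Y ^ 2) := by
  obtain ⟨m, hm⟩ := CAT0Space.exists_midpoint_dist_sq_le x x'
  have hYm : ∀ y ∈ Y, dist y m ^ 2 ≤ s ^ 2 - dist x x' ^ 2 / 4 := by
    intro y hy
    have h := pow_le_pow_left₀ dist_nonneg (hx hy) 2
    have h' := pow_le_pow_left₀ dist_nonneg (hx' hy) 2
    linarith [hm y]
  obtain ⟨y₀, hy₀⟩ := hne
  have hρ : 0 ≤ s ^ 2 - dist x x' ^ 2 / 4 := (sq_nonneg _).trans (hYm y₀ hy₀)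
  have hR : circumradius Y ≤ √(s ^ 2 - dist x x' ^ 2 / 4) :=
    circumradius_le_of_subset_closedBall (Real.sqrt_nonneg _) fun y hy =>
      Real.le_sqrt_of_sq_le (hYm y hy)
  have hR2 := pow_le_pow_left₀ (circumradius_nonneg Y) hR 2
  rw [Real.sq_sqrt hρ] at hR2
  linarith

theorem cauchySeq_of_subset_closedBall [CAT0Space X] {Y : Set X} (hne : Y.Nonempty)
    {x : ℕ → X} {r : ℕ → ℝ} (hY : ∀ n, Y ⊆ closedBall (x n) (r n)) (hr : Antitone r)
    (hlim : Tendsto r atTop (𝓝 (circumradius Y))) : CauchySeq x := by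
  set R := circumradius Y
  refine cauchySeq_of_le_tendsto_0 (fun N => √(4 * (r N ^ 2 - R ^ 2))) (fun n m N hn hm => ?_) ?_
  · have h := dist_sq_le_of_subset_closedBall hne
      ((hY n).trans (closedBall_subset_closedBall (hr hn)))
      ((hY m).trans (closedBall_subset_closedBall (hr hm)))
    simpa using Real.abs_le_sqrt h
  · have hcont : Continuous fun t : ℝ => √(4 * (t ^ 2 - R ^ 2)) := by fun_prop
    have h0 : Tendsto (fun t : ℝ => √(4 * (t ^ 2 - R ^ 2))) (𝓝 R) (𝓝 0) := by
      simpa using hcont.tendsto R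
    exact h0.comp hlim

theorem exists_subset_closedBall_circumradius [CompleteSpace X] [CAT0Space X] {Y : Set X}
    (hne : Y.Nonempty) (hbdd : Bornology.IsBounded Y) :
    ∃ c : X, Y ⊆ closedBall c (circumradius Y) := by
  have : Nonempty X := ⟨hne.some⟩
  set R := circumradius Y
  set r : ℕ → ℝ := fun n => R + 1 / (n + 1)
  have hr : Antitone r := fun m n hmn => by
    simp only [r]
    gcongr
  have hlim : Tendsto r atTop (𝓝 R) := by
    simpa [r] using
      (tendsto_const_nhds (x := R)).add (tendsto_one_div_add_atTop_nhds_zero_nat (𝕜 := ℝ))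
  choose x hx using fun n : ℕ => exists_subset_closedBall_of_circumradius_lt hbdd
    (lt_add_of_pos_right R (Nat.one_div_pos_of_nat (n := n)))
  obtain ⟨c, hc⟩ := cauchySeq_tendsto_of_complete (cauchySeq_of_subset_closedBall hne hx hr hlim)
  exact ⟨c, subset_closedBall_of_tendsto hx hc hlim⟩

theorem eq_of_subset_closedBall_circumradius [CAT0Space X] {Y : Set X} (hne : Y.Nonempty)
    {c c' : X} (hc : Y ⊆ closedBall c (circumradius Y))
    (hc' : Y ⊆ closedBall c' (circumradius Y)) : c = c' := by
  have h := dist_sq_le_of_subset_closedBall hne hc hc'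
  rw [sub_self, mul_zero] at h
  exact dist_eq_zero.1 (sq_nonpos_iff _ |>.1 h)

end MetricSpace

/-- In a complete CAT(0) space, every nonempty bounded subset `Y` has a unique
circumcenter: a point `c` such that `Y` is contained in the closed ball of
radius the circumradius `r_Y` centered at `c`. -/
theorem stmt_3 {X : Type*} [MetricSpace X] [CompleteSpace X] [CAT0Space X]
    (Y : Set X) (hne : Y.Nonempty) (hbdd : Bornology.IsBounded Y) :
    ∃! c : X, Y ⊆ Metric.closedBall c
      (sInf {r : ℝ | 0 < r ∧ ∃ x : X, Y ⊆ Metric.closedBall x r}) := by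
  change ∃! c : X, Y ⊆ closedBall c (circumradius Y)
  obtain ⟨c, hc⟩ := exists_subset_closedBall_circumradius hne hbdd
  exact ⟨c, hc, fun c' hc' => eq_of_subset_closedBall_circumradius hne hc' hc⟩
end

section
/- Let T be a metric tree (an ℝ-tree) with Gromov boundary ∂T, and let S ⊆ ∂T be a finite set of n ≥ 3 distinct boundary points. Fix a basepoint and define F_S : T → ℝ by F_S(x) = ∑_{C ≠ C' ∈ S} (C|C')_x, the sum of Gromov products based at x over unordered pairs of distinct points of S. Then F_S is convex and proper, and consequently its set of minima is a nonempty bounded closed convex subset of T. -/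
/-!
Each Gromov product of ends `(C|C')_x` is a pointwise limit of Gromov products of points
`(a|b)_x = (d(a,x) + d(b,x) - d(a,b))/2`. In a `0`-hyperbolic space distance functions are
convex along geodesics, hence so is `F_S`; each term is `1`-Lipschitz, so `F_S` is continuous.

For properness take three ends `a, b, c` and let `σ_x = (b|c)_x + (a|c)_x + (a|b)_x`. The
four-point condition shows that at least two of `(a|o)_x, (b|o)_x, (c|o)_x` are at most
`σ_x`; an end that works both at `x` and at `o` gives `d(x, o) ≤ σ_x + σ_o ≤ F_S(x) + F_S(o)`.

The sublevel sets `{F_S ≤ inf F_S + 1/(k+1)}` are nested, bounded, closed and closed under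
midpoints, and in a complete tree such a sequence has a common point, which is a minimum.
-/

open Metric Set Filter

/-- The Gromov product of `x` and `y` with respect to the basepoint `o`. -/
noncomputable def gromovProd {X : Type*} [MetricSpace X] (o x y : X) : ℝ :=
  (dist x o + dist y o - dist x y) / 2

open Topology

def IsZeroHyperbolic (T : Type*) [MetricSpace T] : Prop :=
  ∀ o x y z : T, min (gromovProd o x z) (gromovProd o z y) ≤ gromovProd o x y

def ConvexAlongGeodesics {T : Type*} [MetricSpace T] (F : T → ℝ) : Prop :=
  ∀ (x y : T) (γ : ℝ → T), IsGeodesicSegment γ x y →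
    ConvexOn ℝ (Icc 0 (dist x y)) fun t => F (γ t)

def IsMidpointClosed {T : Type*} [MetricSpace T] (C : Set T) : Prop :=
  ∀ q ∈ C, ∀ q' ∈ C, ∃ z ∈ C, dist q z = dist q q' / 2 ∧ dist z q' = dist q q' / 2

theorem convexOn_of_tendsto {ι E : Type*} [AddCommMonoid E] [Module ℝ E] {l : Filter ι}
    [l.NeBot] {s : Set E} {g : ι → E → ℝ} {f : E → ℝ} (hs : Convex ℝ s)
    (hg : ∀ i, ConvexOn ℝ s (g i)) (hf : ∀ x ∈ s, Tendsto (fun i => g i x) l (𝓝 (f x))) :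
    ConvexOn ℝ s f :=
  ⟨hs, fun x hx y hy a b ha hb hab =>
    le_of_tendsto_of_tendsto' (hf _ (hs hx hy ha hb hab))
      (((hf x hx).const_smul a).add ((hf y hy).const_smul b))
      fun i => (hg i).2 hx hy ha hb hab⟩

section GromovProduct

variable {T : Type*} [MetricSpace T]

theorem gromovProd_nonneg (o x y : T) : 0 ≤ gromovProd o x y := by
  unfold gromovProd
  linarith [dist_triangle x o y, dist_comm o y]

theorem gromovProd_comm (o x y : T) : gromovProd o x y = gromovProd o y x := by
  unfold gromovProd
  rw [dist_comm x y]
  ring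

theorem gromovProd_add_gromovProd (x o p : T) :
    gromovProd x p o + gromovProd o p x = dist x o := by
  unfold gromovProd
  rw [dist_comm o x]
  ring

theorem gromovProd_le_add_dist (x y u v : T) :
    gromovProd x u v ≤ gromovProd y u v + dist x y := by
  unfold gromovProd
  linarith [dist_triangle u y x, dist_triangle v y x, dist_comm x y]

end GromovProduct

namespace IsZeroHyperbolic

variable {T : Type*} [MetricSpace T]

theorem two_gromovProd_le_sum (htree : IsZeroHyperbolic T) (x o a b c : T) :
    let s := gromovProd x b c + gromovProd x a c + gromovProd x a b
    (gromovProd x a o ≤ s ∧ gromovProd x b o ≤ s) ∨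
    (gromovProd x a o ≤ s ∧ gromovProd x c o ≤ s) ∨
    (gromovProd x b o ≤ s ∧ gromovProd x c o ≤ s) := by
  intro s
  have hab := htree x a b o
  have hbc := htree x b c o
  have hac := htree x a c o
  rw [gromovProd_comm x o b] at hab
  rw [gromovProd_comm x o c] at hbc hac
  have := gromovProd_nonneg x b c
  have := gromovProd_nonneg x a c
  have := gromovProd_nonneg x a b
  rcases min_le_iff.mp hab with hab | hab <;>
  rcases min_le_iff.mp hbc with hbc | hbc <;>
  rcases min_le_iff.mp hac with hac | hac <;>
  first
    | exact Or.inl ⟨by linarith, by linarith⟩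
    | exact Or.inr (Or.inl ⟨by linarith, by linarith⟩)
    | exact Or.inr (Or.inr ⟨by linarith, by linarith⟩)

/-- By pigeonhole one of `a, b, c` is good for both `x` and `o`, and
`(a|o)_x + (a|x)_o = d(x, o)`. -/
theorem dist_le_sum_gromovProd (htree : IsZeroHyperbolic T) (x o a b c : T) :
    dist x o ≤ (gromovProd x b c + gromovProd x a c + gromovProd x a b)
      + (gromovProd o b c + gromovProd o a c + gromovProd o a b) := by
  have := gromovProd_add_gromovProd x o a
  have := gromovProd_add_gromovProd x o b
  have := gromovProd_add_gromovProd x o c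
  rcases htree.two_gromovProd_le_sum x o a b c with ⟨_, _⟩ | ⟨_, _⟩ | ⟨_, _⟩ <;>
  rcases htree.two_gromovProd_le_sum o x a b c with ⟨_, _⟩ | ⟨_, _⟩ | ⟨_, _⟩ <;>
  linarith

theorem dist_add_le_or (htree : IsZeroHyperbolic T) {q q' z : T}
    (hz : dist q z + dist z q' = dist q q') (p : T) :
    dist p z + dist q z ≤ dist p q ∨ dist p z + dist z q' ≤ dist p q' := by
  have h := htree p q q' z
  unfold gromovProd at h
  rw [dist_comm q p, dist_comm q' p, dist_comm z p] at h
  rcases min_le_iff.mp h with h | h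
  · right; linarith
  · left; linarith

theorem dist_add_half_le_max (htree : IsZeroHyperbolic T) (p : T) {q q' z : T}
    (hqz : dist q z = dist q q' / 2) (hzq' : dist z q' = dist q q' / 2) :
    dist p z + dist q q' / 2 ≤ max (dist p q) (dist p q') := by
  rcases htree.dist_add_le_or (q := q) (q' := q') (z := z) (by linarith) p with h | h
  · exact le_max_of_le_left (by linarith)
  · exact le_max_of_le_right (by linarith)

theorem convexOn_dist_comp {γ : ℝ → T} {s : Set ℝ} (htree : IsZeroHyperbolic T)
    (hs : Convex ℝ s) (hγ : IsGeodesicOn γ s) (p : T) :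
    ConvexOn ℝ s fun t => dist p (γ t) := by
  refine ⟨hs, fun t₁ ht₁ t₂ ht₂ α β hα hβ hαβ => ?_⟩
  simp only [smul_eq_mul]
  have hs' := hs ht₁ ht₂ hα hβ hαβ
  simp only [smul_eq_mul] at hs'
  set t := α * t₁ + β * t₂
  have h₁ : dist (γ t₁) (γ t) = β * |t₁ - t₂| := by
    rw [hγ ht₁ hs', show t₁ - t = β * (t₁ - t₂) by linear_combination -t₁ * hαβ,
      abs_mul, abs_of_nonneg hβ]
  have h₂ : dist (γ t) (γ t₂) = α * |t₁ - t₂| := by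
    rw [hγ hs' ht₂, show t - t₂ = α * (t₁ - t₂) by linear_combination t₂ * hαβ,
      abs_mul, abs_of_nonneg hα]
  have hbetween : dist (γ t₁) (γ t) + dist (γ t) (γ t₂) = dist (γ t₁) (γ t₂) := by
    rw [h₁, h₂, hγ ht₁ ht₂, ← add_mul, add_comm, hαβ, one_mul]
  have hZ : dist p (γ t) = α * dist p (γ t) + β * dist p (γ t) := by
    rw [← add_mul, hαβ, one_mul]
  rcases htree.dist_add_le_or hbetween p with h | h
  · have := dist_triangle p (γ t₂) (γ t)
    rw [dist_comm (γ t₂), h₂] at this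
    rw [h₁] at h
    nlinarith [mul_le_mul_of_nonneg_left this hβ]
  · have := dist_triangle p (γ t₁) (γ t)
    rw [h₁] at this
    rw [h₂] at h
    nlinarith [mul_le_mul_of_nonneg_left this hα]

end IsZeroHyperbolic

section GeodesicConvexity

variable {T : Type*} [MetricSpace T]

theorem IsGeodesicSegment.dist_left {γ : ℝ → T} {x y : T} (hγ : IsGeodesicSegment γ x y)
    {t : ℝ} (ht : t ∈ Icc 0 (dist x y)) : dist x (γ t) = t := by
  calc dist x (γ t) = dist (γ 0) (γ t) := by rw [hγ.1]
    _ = |0 - t| := hγ.2.2 (left_mem_Icc.2 dist_nonneg) ht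
    _ = t := by rw [zero_sub, abs_neg, abs_of_nonneg ht.1]

theorem IsGeodesicSegment.dist_right {γ : ℝ → T} {x y : T} (hγ : IsGeodesicSegment γ x y)
    {t : ℝ} (ht : t ∈ Icc 0 (dist x y)) : dist (γ t) y = dist x y - t := by
  calc dist (γ t) y = dist (γ t) (γ (dist x y)) := by rw [hγ.2.1]
    _ = |t - dist x y| := hγ.2.2 ht (right_mem_Icc.2 dist_nonneg)
    _ = dist x y - t := by rw [abs_sub_comm, abs_of_nonneg (sub_nonneg.2 ht.2)]

theorem ConvexAlongGeodesics.geodesicallyConvex_sublevel {F : T → ℝ}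
    (hF : ConvexAlongGeodesics F) (M : ℝ) : GeodesicallyConvex {x | F x ≤ M} := by
  intro x hx y hy γ hγ
  have hconv := (hF x y γ hγ).convex_le M
  have h₀ : (0 : ℝ) ∈ {t ∈ Icc 0 (dist x y) | F (γ t) ≤ M} :=
    ⟨left_mem_Icc.2 dist_nonneg, by rwa [hγ.1]⟩
  have h₁ : dist x y ∈ {t ∈ Icc 0 (dist x y) | F (γ t) ≤ M} :=
    ⟨right_mem_Icc.2 dist_nonneg, by rwa [hγ.2.1]⟩
  exact fun t ht => (hconv.ordConnected.out h₀ h₁ ht).2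

theorem GeodesicallyConvex.isMidpointClosed
    (hgeo : ∀ x y : T, ∃ γ : ℝ → T, IsGeodesicSegment γ x y) {C : Set T}
    (hC : GeodesicallyConvex C) : IsMidpointClosed C := by
  intro q hq q' hq'
  obtain ⟨γ, hγ⟩ := hgeo q q'
  have hmid : dist q q' / 2 ∈ Icc 0 (dist q q') := by
    constructor <;> linarith [dist_nonneg (x := q) (y := q')]
  refine ⟨γ (dist q q' / 2), hC q hq q' hq' γ hγ _ hmid, hγ.dist_left hmid, ?_⟩
  rw [hγ.dist_right hmid]
  ring

end GeodesicConvexity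

section Minimizer

variable {T : Type*} [MetricSpace T] [CompleteSpace T]

/-- Points `q k ∈ S k` almost nearest to a fixed `p` form a Cauchy sequence: the midpoint of
`q j` and `q k` lies in `S j`, so it is not much closer to `p` than `q j`, and in a tree this
forces `d(q j, q k)` to be small. -/
theorem IsZeroHyperbolic.nonempty_iInter (htree : IsZeroHyperbolic T) {S : ℕ → Set T}
    (hanti : Antitone S) (hne : ∀ k, (S k).Nonempty) (hcl : ∀ k, IsClosed (S k))
    (hmid : ∀ k, IsMidpointClosed (S k)) (hbdd : Bornology.IsBounded (S 0)) :
    (⋂ k, S k).Nonempty := by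
  obtain ⟨p, -⟩ := hne 0
  set e : ℕ → ℝ := fun k => infDist p (S k)
  have he_mono : Monotone e := fun j k hjk => infDist_le_infDist_of_subset (hanti hjk) (hne k)
  have he_bdd : BddAbove (range e) := by
    obtain ⟨R, hR⟩ := hbdd.subset_closedBall p
    refine ⟨R, ?_⟩
    rintro _ ⟨k, rfl⟩
    obtain ⟨q, hq⟩ := hne k
    exact (infDist_le_dist_of_mem hq).trans (mem_closedBall'.1 (hR (hanti (Nat.zero_le k) hq)))
  set E := ⨆ k, e k
  have he_le : ∀ k, e k ≤ E := le_ciSup he_bdd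
  have hnear : ∀ k, ∃ q ∈ S k, dist p q < e k + 1 / (k + 1) := fun k =>
    (infDist_lt_iff (hne k)).1 (lt_add_of_pos_right _ Nat.one_div_pos_of_nat)
  choose q hqS hq using hnear
  set b : ℕ → ℝ := fun N => 2 * (E - e N + 1 / (N + 1))
  have hb_anti : Antitone b := fun j k hjk => by
    have := he_mono hjk
    have : 1 / ((k : ℝ) + 1) ≤ 1 / (j + 1) := Nat.one_div_le_one_div hjk
    simp only [b]
    linarith
  have hb_lim : Tendsto b atTop (𝓝 0) := by
    have := (((tendsto_const_nhds (x := E)).sub (tendsto_atTop_ciSup he_mono he_bdd)).add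
      tendsto_one_div_add_atTop_nhds_zero_nat).const_mul (2 : ℝ)
    rwa [sub_self, zero_add, mul_zero] at this
  have hdist : ∀ j k, j ≤ k → dist (q j) (q k) ≤ b j := by
    intro j k hjk
    obtain ⟨z, hz, hqz, hzq⟩ := hmid j (q j) (hqS j) (q k) (hanti hjk (hqS k))
    have hmax := htree.dist_add_half_le_max p hqz hzq
    have hz_far : e j ≤ dist p z := infDist_le_dist_of_mem hz
    have : 1 / ((k : ℝ) + 1) ≤ 1 / (j + 1) := Nat.one_div_le_one_div hjk
    have : max (dist p (q j)) (dist p (q k)) ≤ E + 1 / (j + 1) :=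
      max_le (by linarith [hq j, he_le j]) (by linarith [hq k, he_le k])
    simp only [b]
    linarith
  have hcauchy : CauchySeq q := by
    refine cauchySeq_of_le_tendsto_0 b (fun j k N hj hk => ?_) hb_lim
    rcases le_total j k with h | h
    · exact (hdist j k h).trans (hb_anti hj)
    · exact (dist_comm (q j) (q k) ▸ hdist k j h).trans (hb_anti hk)
  obtain ⟨x, hx⟩ := cauchySeq_tendsto_of_complete hcauchy
  exact ⟨x, mem_iInter.2 fun k => (hcl k).mem_of_tendsto hx
    ((eventually_ge_atTop k).mono fun j hj => hanti hj (hqS j))⟩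

theorem ConvexAlongGeodesics.exists_forall_le [Nonempty T] (htree : IsZeroHyperbolic T)
    (hgeo : ∀ x y : T, ∃ γ : ℝ → T, IsGeodesicSegment γ x y) {F : T → ℝ}
    (hF : ConvexAlongGeodesics F) (hcont : Continuous F)
    (hproper : ∀ M, Bornology.IsBounded {x | F x ≤ M}) (hbdd : BddBelow (range F)) :
    ∃ x, ∀ y, F x ≤ F y := by
  set m := ⨅ y, F y
  set S : ℕ → Set T := fun k => {x | F x ≤ m + 1 / (k + 1)}
  have hanti : Antitone S := fun j k hjk x (hx : F x ≤ _) =>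
    hx.trans (add_le_add_right (Nat.one_div_le_one_div hjk) m)
  have hne : ∀ k, (S k).Nonempty := fun k =>
    let ⟨x, hx⟩ :=
      exists_lt_of_ciInf_lt (lt_add_of_pos_right m (Nat.one_div_pos_of_nat (n := k)))
    ⟨x, hx.le⟩
  obtain ⟨x, hx⟩ := htree.nonempty_iInter hanti hne
    (fun k => isClosed_le hcont continuous_const)
    (fun k => (hF.geodesicallyConvex_sublevel _).isMidpointClosed hgeo) (hproper _)
  have hxm : F x ≤ m := by
    simpa using ge_of_tendsto' ((tendsto_const_nhds (x := m)).add
      tendsto_one_div_add_atTop_nhds_zero_nat) fun k => (mem_iInter.1 hx k : x ∈ S k)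
  exact ⟨x, fun y => hxm.trans (ciInf_le hbdd y)⟩

end Minimizer

section Ends

variable {T : Type*} [MetricSpace T] {α ι : Type*}

def IsEndGromovProd (r : ι → α → T) (l : Filter α) (gp : T → ι → ι → ℝ) : Prop :=
  ∀ x i j, i ≠ j → Tendsto (fun t => gromovProd x (r i t) (r j t)) l (𝓝 (gp x i j))

variable {l : Filter α} [l.NeBot]

theorem nonneg_of_tendsto_gromovProd {a b : α → T} {x : T} {c : ℝ}
    (h : Tendsto (fun t => gromovProd x (a t) (b t)) l (𝓝 c)) : 0 ≤ c :=
  ge_of_tendsto' h fun _ => gromovProd_nonneg _ _ _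

theorem lipschitzWith_of_tendsto_gromovProd {a b : α → T} {g : T → ℝ}
    (h : ∀ x, Tendsto (fun t => gromovProd x (a t) (b t)) l (𝓝 (g x))) : LipschitzWith 1 g :=
  LipschitzWith.of_le_add fun x y => le_of_tendsto_of_tendsto' (h x) ((h y).add_const _)
    fun _ => gromovProd_le_add_dist x y _ _

theorem IsZeroHyperbolic.convexOn_gromovProd_comp (htree : IsZeroHyperbolic T) {γ : ℝ → T}
    {s : Set ℝ} (hs : Convex ℝ s) (hγ : IsGeodesicOn γ s) (u v : T) :
    ConvexOn ℝ s fun t => gromovProd (γ t) u v := by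
  have := (((htree.convexOn_dist_comp hs hγ u).add (htree.convexOn_dist_comp hs hγ v)).add_const
    (-dist u v)).smul (c := (1 / 2 : ℝ)) (by norm_num)
  refine this.congr fun t _ => ?_
  simp only [gromovProd, Pi.add_apply, smul_eq_mul]
  ring

theorem IsZeroHyperbolic.convexAlongGeodesics_of_tendsto_gromovProd
    (htree : IsZeroHyperbolic T) {a b : α → T} {g : T → ℝ}
    (h : ∀ x, Tendsto (fun t => gromovProd x (a t) (b t)) l (𝓝 (g x))) :
    ConvexAlongGeodesics g := fun _ _ γ hγ =>
  convexOn_of_tendsto (convex_Icc _ _)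
    (fun t => htree.convexOn_gromovProd_comp (convex_Icc _ _) hγ.2.2 (a t) (b t))
    fun s _ => h (γ s)

theorem IsZeroHyperbolic.dist_le_of_tendsto_gromovProd (htree : IsZeroHyperbolic T)
    {a b c : α → T} {gbc gac gab : T → ℝ}
    (hbc : ∀ x, Tendsto (fun t => gromovProd x (b t) (c t)) l (𝓝 (gbc x)))
    (hac : ∀ x, Tendsto (fun t => gromovProd x (a t) (c t)) l (𝓝 (gac x)))
    (hab : ∀ x, Tendsto (fun t => gromovProd x (a t) (b t)) l (𝓝 (gab x))) (x o : T) :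
    dist x o ≤ (gbc x + gac x + gab x) + (gbc o + gac o + gab o) :=
  ge_of_tendsto' ((((hbc x).add (hac x)).add (hab x)).add (((hbc o).add (hac o)).add (hab o)))
    fun t => htree.dist_le_sum_gromovProd x o (a t) (b t) (c t)

end Ends

section PairSum

variable {T : Type*} [MetricSpace T] {ι : Type*} [Fintype ι] [LinearOrder ι] {α : Type*}

noncomputable def pairSum (gp : T → ι → ι → ℝ) (x : T) : ℝ :=
  ∑ p ∈ Finset.univ.filter (fun p : ι × ι => p.1 < p.2), gp x p.1 p.2

variable {l : Filter α} [l.NeBot] {r : ι → α → T} {gp : T → ι → ι → ℝ}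

theorem pairSum_nonneg (hgp : IsEndGromovProd r l gp) (x : T) : 0 ≤ pairSum gp x :=
  Finset.sum_nonneg fun p hp =>
    nonneg_of_tendsto_gromovProd (hgp x p.1 p.2 (Finset.mem_filter.1 hp).2.ne)

theorem continuous_pairSum (hgp : IsEndGromovProd r l gp) : Continuous (pairSum gp) :=
  continuous_finsetSum _ fun p hp => (lipschitzWith_of_tendsto_gromovProd
    fun x => hgp x p.1 p.2 (Finset.mem_filter.1 hp).2.ne).continuous

theorem IsZeroHyperbolic.convexAlongGeodesics_pairSum (htree : IsZeroHyperbolic T)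
    (hgp : IsEndGromovProd r l gp) : ConvexAlongGeodesics (pairSum gp) := by
  intro x y γ hγ
  have hterm : ∀ p ∈ Finset.univ.filter (fun p : ι × ι => p.1 < p.2),
      ConvexOn ℝ (Icc 0 (dist x y)) fun t => gp (γ t) p.1 p.2 := fun p hp =>
    htree.convexAlongGeodesics_of_tendsto_gromovProd
      (fun z => hgp z p.1 p.2 (Finset.mem_filter.1 hp).2.ne) x y γ hγ
  have := Finset.sum_induction _ (ConvexOn ℝ (Icc 0 (dist x y)))
    (fun _ _ hf hg => hf.add hg) (convexOn_const 0 (convex_Icc _ _)) hterm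
  rw [Finset.sum_fn] at this
  exact this

theorem add_add_le_pairSum (hgp : IsEndGromovProd r l gp) {i j k : ι} (hij : i < j) (hjk : j < k) (x : T) :
    gp x j k + gp x i k + gp x i j ≤ pairSum gp x := by
  have hsub : {(i, j), (i, k), (j, k)} ⊆ Finset.univ.filter (fun p : ι × ι => p.1 < p.2) := by
    simp [Finset.insert_subset_iff, hij, hjk, hij.trans hjk]
  have := Finset.sum_le_sum_of_subset_of_nonneg hsub fun p hp _ =>
    nonneg_of_tendsto_gromovProd (hgp x p.1 p.2 (Finset.mem_filter.1 hp).2.ne)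
  rw [Finset.sum_insert (by simp [hij.ne, hjk.ne]), Finset.sum_pair (by simp [hij.ne])] at this
  unfold pairSum
  linarith

theorem IsZeroHyperbolic.isBounded_sublevel_pairSum (htree : IsZeroHyperbolic T)
    (hgp : IsEndGromovProd r l gp) {i j k : ι} (hij : i < j) (hjk : j < k) (M : ℝ) :
    Bornology.IsBounded {x | pairSum gp x ≤ M} :=
  isBounded_iff.2 ⟨2 * M, fun x (hx : _ ≤ M) y (hy : _ ≤ M) => by
    linarith [htree.dist_le_of_tendsto_gromovProd (hgp · j k hjk.ne) (hgp · i k (hij.trans hjk).ne)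
      (hgp · i j hij.ne) x y, add_add_le_pairSum hgp hij hjk x, add_add_le_pairSum hgp hij hjk y]⟩

end PairSum

theorem stmt_18_general {T : Type*} [MetricSpace T] [CompleteSpace T]
    (hgeo : ∀ x y : T, ∃ γ : ℝ → T, IsGeodesicSegment γ x y)
    (htree : ∀ o x y z : T,
      min (gromovProd o x z) (gromovProd o z y) ≤ gromovProd o x y)
    (n : ℕ) (hn : 3 ≤ n)
    (r : Fin n → ℝ → T)
    (gp : T → Fin n → Fin n → ℝ)
    (hgp : ∀ (x : T) (i j : Fin n), i ≠ j →
      Tendsto (fun t => gromovProd x (r i t) (r j t)) atTop (nhds (gp x i j)))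
    (F : T → ℝ)
    (hF : ∀ x : T, F x =
      ∑ p ∈ Finset.univ.filter (fun p : Fin n × Fin n => p.1 < p.2), gp x p.1 p.2) :
    (∀ (x y : T) (γ : ℝ → T), IsGeodesicSegment γ x y →
        ConvexOn ℝ (Set.Icc 0 (dist x y)) fun t => F (γ t)) ∧
    (∀ M : ℝ, Bornology.IsBounded {x : T | F x ≤ M}) ∧
    {x : T | ∀ y : T, F x ≤ F y}.Nonempty ∧
    Bornology.IsBounded {x : T | ∀ y : T, F x ≤ F y} ∧
    IsClosed {x : T | ∀ y : T, F x ≤ F y} ∧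
    GeodesicallyConvex {x : T | ∀ y : T, F x ≤ F y} := by
  obtain rfl : F = pairSum gp := funext hF
  have htree : IsZeroHyperbolic T := htree
  have : Nonempty T := ⟨r ⟨0, by omega⟩ 0⟩
  have hconv := htree.convexAlongGeodesics_pairSum hgp
  have hproper := htree.isBounded_sublevel_pairSum hgp
    (i := ⟨0, by omega⟩) (j := ⟨1, by omega⟩) (k := ⟨2, by omega⟩) (by simp) (by simp)
  have hcont := continuous_pairSum hgp
  obtain ⟨x₀, hx₀⟩ := hconv.exists_forall_le htree hgeo hcont hproper
    ⟨0, forall_mem_range.2 (pairSum_nonneg hgp)⟩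
  refine ⟨hconv, hproper, ⟨x₀, hx₀⟩, (hproper _).subset fun x hx => hx x₀, ?_, ?_⟩
  · rw [ofPred_forall]
    exact isClosed_iInter fun y => isClosed_le hcont continuous_const
  · exact fun x hx y hy γ hγ t ht w =>
      hconv.geodesicallyConvex_sublevel _ x (hx w) y (hy w) γ hγ t ht

/-- Let `T` be a complete metric tree (a geodesic `0`-hyperbolic space), and let
`S` be a set of `n ≥ 3` pairwise distinct boundary points, represented by
pairwise non-asymptotic geodesic rays `r i`. For `x ∈ T` let `(Cᵢ|Cⱼ)_x` be the
Gromov product of the corresponding ends (the limit `gp x i j` of the Gromov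
products along the rays), and set `F_S(x) = ∑_{i<j} (Cᵢ|Cⱼ)_x`. Then `F_S` is
convex and proper, and its set of minima is nonempty, bounded, closed and
convex. -/
theorem stmt_18 {T : Type*} [MetricSpace T] [CompleteSpace T]
    (hgeo : ∀ x y : T, ∃ γ : ℝ → T, IsGeodesicSegment γ x y)
    (htree : ∀ o x y z : T,
      min (gromovProd o x z) (gromovProd o z y) ≤ gromovProd o x y)
    (n : ℕ) (hn : 3 ≤ n)
    (r : Fin n → ℝ → T) (hray : ∀ i, IsGeodesicOn (r i) (Set.Ici 0))
    (hdistinct : ∀ i j : Fin n, i ≠ j →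
      ∀ K : ℝ, ∃ t : ℝ, 0 ≤ t ∧ K < dist (r i t) (r j t))
    (gp : T → Fin n → Fin n → ℝ)
    (hgp : ∀ (x : T) (i j : Fin n), i ≠ j →
      Tendsto (fun t => gromovProd x (r i t) (r j t)) atTop (nhds (gp x i j)))
    (F : T → ℝ)
    (hF : ∀ x : T, F x =
      ∑ p ∈ Finset.univ.filter (fun p : Fin n × Fin n => p.1 < p.2), gp x p.1 p.2) :
    (∀ (x y : T) (γ : ℝ → T), IsGeodesicSegment γ x y →
        ConvexOn ℝ (Set.Icc 0 (dist x y)) fun t => F (γ t)) ∧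
    (∀ M : ℝ, Bornology.IsBounded {x : T | F x ≤ M}) ∧
    {x : T | ∀ y : T, F x ≤ F y}.Nonempty ∧
    Bornology.IsBounded {x : T | ∀ y : T, F x ≤ F y} ∧
    IsClosed {x : T | ∀ y : T, F x ≤ F y} ∧
    GeodesicallyConvex {x : T | ∀ y : T, F x ≤ F y} :=
  stmt_18_general hgeo htree n hn r gp hgp F hF
end
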